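/- arXiv:2212.12328 — 2 statements merged into one kernel-verified Lean document; each statement's English description precedes it below -/
import Mathlib

section
/- Let 𝒯 be the linear system spanned by k linearly independent degree-d forms f_1,…,f_k in x_0,…,x_n over ℂ, let f be a member of 𝒯, and let a ∈ ℤ^{n+1} be a normalized one-parameter subgroup. Then there exist k−1 members g_1,…,g_{k−1} of 𝒯 such that ω(𝒯,a) ≤ k · max{ ω(f,a), ω(g_1,a), …, ω(g_{k−1},a) }. -/
noncomputable section

open Finset MvPolynomial

/-- The pairing `⟨I,a⟩ = Σ_j I_j·a_j` of an exponent vector with a one-parameter subgroup. -/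
def pairing (n : ℕ) (I : Fin (n+1) →₀ ℕ) (a : Fin (n+1) → ℤ) : ℤ :=
  ∑ j, (I j : ℤ) * a j

/-- The affine weight `w_a(I) = Σ_{j=0}^{n-1} I_j·(a_j − a_n)` of an exponent vector. -/
def wt (n : ℕ) (a : Fin (n+1) → ℤ) (I : Fin (n+1) →₀ ℕ) : ℤ :=
  ∑ j : Fin n, (I j.castSucc : ℤ) * (a j.castSucc - a (Fin.last n))

/-- `C(a) = Σ_{j=0}^{n-1} a_j − n·a_n`. -/
def Cwt (n : ℕ) (a : Fin (n+1) → ℤ) : ℤ :=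
  (∑ j : Fin n, a j.castSucc) - (n : ℤ) * a (Fin.last n)

/-- A normalized one-parameter subgroup: `a_0 ≥ a_1 ≥ … ≥ a_n` and `Σ_i a_i = 0`. -/
def Normalized (n : ℕ) (a : Fin (n+1) → ℤ) : Prop :=
  Antitone a ∧ ∑ i, a i = 0

/-- `S` is in the Plücker support of the linear system spanned by `f`: `S` is a `k`-element
set of degree-`d` exponent vectors such that the `k×k` matrix whose `(i,I)` entry is the
coefficient of `f i` at the monomial `I ∈ S` has nonzero determinant. -/
def InPlucker (n d k : ℕ) (f : Fin k → MvPolynomial (Fin (n+1)) ℂ)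
    (S : Finset (Fin (n+1) →₀ ℕ)) : Prop :=
  (∀ I ∈ S, (∑ j, I j) = d) ∧
  ∃ h : S.card = k,
    Matrix.det (Matrix.of fun i j : Fin k =>
      MvPolynomial.coeff ((S.equivFin.symm (Fin.cast h.symm j)).1) (f i)) ≠ 0

/-- The affine weight `ω(𝒯,a)` of a linear system: the minimum over the Plücker support of
`Σ_{I∈S} w_a(I)`. -/
def omegaT (n d k : ℕ) (a : Fin (n+1) → ℤ) (f : Fin k → MvPolynomial (Fin (n+1)) ℂ) : ℤ :=
  sInf {x : ℤ | ∃ S : Finset (Fin (n+1) →₀ ℕ), InPlucker n d k f S ∧ x = ∑ I ∈ S, wt n a I}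

/-- The Hilbert–Mumford weight `μ(𝒯,a)`: minus the minimum over the Plücker support of
`Σ_{I∈S} ⟨I,a⟩`. -/
def muT (n d k : ℕ) (a : Fin (n+1) → ℤ) (f : Fin k → MvPolynomial (Fin (n+1)) ℂ) : ℤ :=
  - sInf {x : ℤ | ∃ S : Finset (Fin (n+1) →₀ ℕ), InPlucker n d k f S ∧ x = ∑ I ∈ S, pairing n I a}

/-- The affine weight `ω(g,a) = min_{I ∈ Supp(g)} w_a(I)` of a nonzero form. -/
def omegaF (n : ℕ) (a : Fin (n+1) → ℤ) (g : MvPolynomial (Fin (n+1)) ℂ) : ℤ :=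
  sInf {x : ℤ | ∃ I ∈ g.support, x = wt n a I}

/-- The Hilbert–Mumford weight `μ(g,a) = −min_{I ∈ Supp(g)} ⟨I,a⟩` of a nonzero form. -/
def muF (n : ℕ) (a : Fin (n+1) → ℤ) (g : MvPolynomial (Fin (n+1)) ℂ) : ℤ :=
  - sInf {x : ℤ | ∃ I ∈ g.support, x = pairing n I a}

/-- The affine weight `ω(h,a) = min{ a_j − a_n : h_j ≠ 0 }` of a nonzero linear form given by
its coefficient vector `h`. -/
def omegaH (n : ℕ) (a : Fin (n+1) → ℤ) (h : Fin (n+1) → ℂ) : ℤ :=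
  sInf {x : ℤ | ∃ j, h j ≠ 0 ∧ x = a j - a (Fin.last n)}

/-- The Hilbert–Mumford weight `μ(h,a) = −min{ a_j : h_j ≠ 0 }` of a nonzero linear form. -/
def muH (n : ℕ) (a : Fin (n+1) → ℤ) (h : Fin (n+1) → ℂ) : ℤ :=
  - sInf {x : ℤ | ∃ j, h j ≠ 0 ∧ x = a j}

/-- The action of `A ∈ SL(n+1,ℂ)` on forms: `(A·g)(x) = g(Ax)`. -/
def actSL (n : ℕ) (A : Matrix.SpecialLinearGroup (Fin (n+1)) ℂ)
    (g : MvPolynomial (Fin (n+1)) ℂ) : MvPolynomial (Fin (n+1)) ℂ :=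
  MvPolynomial.aeval
    (fun i => ∑ j, MvPolynomial.C ((A : Matrix (Fin (n+1)) (Fin (n+1)) ℂ) i j)
      * MvPolynomial.X j) g

/-- A nonzero degree-`d` form is semistable if `ω(A·g,a) ≤ (d/(n+1))·C(a)` for every
`A ∈ SL(n+1,ℂ)` and every nontrivial normalized one-parameter subgroup `a`. -/
def FormSemistable (n d : ℕ) (g : MvPolynomial (Fin (n+1)) ℂ) : Prop :=
  ∀ A : Matrix.SpecialLinearGroup (Fin (n+1)) ℂ, ∀ a : Fin (n+1) → ℤ,
    Normalized n a → a ≠ 0 →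
      (omegaF n a (actSL n A g) : ℚ) ≤ (d : ℚ) / (n + 1) * (Cwt n a : ℚ)

/-- A nonzero degree-`d` form is stable if `ω(A·g,a) < (d/(n+1))·C(a)` for every
`A ∈ SL(n+1,ℂ)` and every nontrivial normalized one-parameter subgroup `a`. -/
def FormStable (n d : ℕ) (g : MvPolynomial (Fin (n+1)) ℂ) : Prop :=
  ∀ A : Matrix.SpecialLinearGroup (Fin (n+1)) ℂ, ∀ a : Fin (n+1) → ℤ,
    Normalized n a → a ≠ 0 →
      (omegaF n a (actSL n A g) : ℚ) < (d : ℚ) / (n + 1) * (Cwt n a : ℚ)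

/-- A linear system spanned by `f` is semistable if `ω(A·𝒯,a) ≤ (k·d/(n+1))·C(a)` for every
`A ∈ SL(n+1,ℂ)` and every nontrivial normalized one-parameter subgroup `a`. -/
def TupleSemistable (n d k : ℕ) (f : Fin k → MvPolynomial (Fin (n+1)) ℂ) : Prop :=
  ∀ A : Matrix.SpecialLinearGroup (Fin (n+1)) ℂ, ∀ a : Fin (n+1) → ℤ,
    Normalized n a → a ≠ 0 →
      (omegaT n d k a (fun i => actSL n A (f i)) : ℚ) ≤
        (k : ℚ) * d / (n + 1) * (Cwt n a : ℚ)

/-- A linear system spanned by `f` is stable if `ω(A·𝒯,a) < (k·d/(n+1))·C(a)` for every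
`A ∈ SL(n+1,ℂ)` and every nontrivial normalized one-parameter subgroup `a`. -/
def TupleStable (n d k : ℕ) (f : Fin k → MvPolynomial (Fin (n+1)) ℂ) : Prop :=
  ∀ A : Matrix.SpecialLinearGroup (Fin (n+1)) ℂ, ∀ a : Fin (n+1) → ℤ,
    Normalized n a → a ≠ 0 →
      (omegaT n d k a (fun i => actSL n A (f i)) : ℚ) <
        (k : ℚ) * d / (n + 1) * (Cwt n a : ℚ)

theorem minor_lemma {k : ℕ} {ι : Type*} [Fintype ι] [DecidableEq ι] (v : Fin k → ι → ℂ)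
    (hv : LinearIndependent ℂ v) :
    ∃ s : Fin k → ι, Function.Injective s ∧
      Matrix.det (Matrix.of fun i j : Fin k => v i (s j)) ≠ 0 := by
  classical
  have hrank : (Matrix.of v).rank = k := by simpa using LinearIndependent.rank_matrix (M := Matrix.of v) hv
  set w : ι → (Fin k → ℂ) := fun I i => v i I with hw
  have hspan : Submodule.span ℂ (Set.range w) = ⊤ := by
    apply Submodule.eq_top_of_finrank_eq
    have : Set.range w = Set.range (Matrix.col (Matrix.of v)) := rfl
    rw [this, ← Matrix.rank_eq_finrank_span_cols, hrank]
    simp [Module.finrank_fintype_fun_eq_card]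
  obtain ⟨t, hsub, hsp, hli⟩ := exists_linearIndependent ℂ (Set.range w)
  rw [hspan] at hsp
  have hfin : t.Finite := hli.setFinite
  let b : Module.Basis t ℂ (Fin k → ℂ) := Module.Basis.mk hli (by simp [Subtype.range_coe, hsp])
  haveI : Fintype t := hfin.fintype
  have hcard : Fintype.card t = k := by
    have := Module.finrank_eq_card_basis b
    simpa [Module.finrank_fintype_fun_eq_card] using this.symm
  let e : Fin k ≃ t := (Fintype.equivFinOfCardEq hcard).symm
  let b' : Module.Basis (Fin k) ℂ (Fin k → ℂ) := b.reindex e.symm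
  have hb' : ∀ j, (b' j : Fin k → ℂ) = (e j : Fin k → ℂ) := by
    intro j; simp [b', Module.Basis.reindex_apply, b, Module.Basis.mk_apply]
  have hchoice : ∀ j : Fin k, ∃ I : ι, w I = (e j : Fin k → ℂ) := fun j => hsub (e j).2
  choose s hs using hchoice
  refine ⟨s, ?_, ?_⟩
  · intro j1 j2 h
    have : (e j1 : Fin k → ℂ) = (e j2 : Fin k → ℂ) := by rw [← hs, ← hs, h]
    exact e.injective (Subtype.ext this)
  · have hdet : IsUnit ((Pi.basisFun ℂ (Fin k)).det ⇑b') := Module.Basis.isUnit_det _ b'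
    rw [Module.Basis.det_apply] at hdet
    have hmat : (Matrix.of fun i j : Fin k => v i (s j)) =
        (Pi.basisFun ℂ (Fin k)).toMatrix ⇑b' := by
      ext i j
      rw [Module.Basis.toMatrix_apply, hb', ← hs j]
      simp [w]
    rw [hmat]
    exact hdet.ne_zero

theorem wt_nonneg' (n : ℕ) (a : Fin (n+1) → ℤ) (ha : Antitone a) (I : Fin (n+1) →₀ ℕ) :
    0 ≤ wt n a I := by
  apply Finset.sum_nonneg
  intro j _
  exact mul_nonneg (Int.natCast_nonneg _) (sub_nonneg.mpr (ha (Fin.le_last _)))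

theorem wt_le_bound (n d : ℕ) (a : Fin (n+1) → ℤ) (ha : Antitone a) (I : Fin (n+1) →₀ ℕ)
    (hdeg : ∑ j, I j = d) : wt n a I ≤ (d : ℤ) * (a 0 - a (Fin.last n)) := by
  have hC : (0:ℤ) ≤ a 0 - a (Fin.last n) := sub_nonneg.mpr (ha (Fin.zero_le _))
  have h1 : wt n a I ≤ ∑ j : Fin n, (I j.castSucc : ℤ) * (a 0 - a (Fin.last n)) := by
    apply Finset.sum_le_sum
    intro j _
    have h0 : a j.castSucc ≤ a 0 := ha (Fin.zero_le _)
    have hl : a (Fin.last n) ≤ a j.castSucc := ha (Fin.le_last _)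
    exact mul_le_mul_of_nonneg_left (by omega) (Int.natCast_nonneg _)
  have h2 : ∑ j : Fin n, (I j.castSucc : ℤ) ≤ (d : ℤ) := by
    have : ∑ j : Fin n, I j.castSucc ≤ d := by
      rw [← hdeg, Fin.sum_univ_castSucc]
      exact Nat.le_add_right _ _
    exact_mod_cast Nat.cast_le.mpr this
  calc wt n a I ≤ ∑ j : Fin n, (I j.castSucc : ℤ) * (a 0 - a (Fin.last n)) := h1
    _ = (∑ j : Fin n, (I j.castSucc : ℤ)) * (a 0 - a (Fin.last n)) := by rw [Finset.sum_mul]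
    _ ≤ (d : ℤ) * (a 0 - a (Fin.last n)) := mul_le_mul_of_nonneg_right h2 hC

theorem omegaF_spec (n : ℕ) (a : Fin (n+1) → ℤ) (g : MvPolynomial (Fin (n+1)) ℂ) (hg : g ≠ 0) :
    (∃ I ∈ g.support, omegaF n a g = wt n a I) ∧ ∀ J ∈ g.support, omegaF n a g ≤ wt n a J := by
  classical
  have hset : {x : ℤ | ∃ I ∈ g.support, x = wt n a I} = ↑(g.support.image (wt n a)) := by
    ext x; simp [eq_comm]
  have hfin : {x : ℤ | ∃ I ∈ g.support, x = wt n a I}.Finite := by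
    rw [hset]; exact (g.support.image (wt n a)).finite_toSet
  have hne : {x : ℤ | ∃ I ∈ g.support, x = wt n a I}.Nonempty := by
    obtain ⟨I, hI⟩ := (MvPolynomial.support_nonempty.mpr hg)
    exact ⟨wt n a I, I, hI, rfl⟩
  constructor
  · have := hne.csInf_mem hfin
    obtain ⟨I, hI, hx⟩ := this
    exact ⟨I, hI, hx⟩
  · intro J hJ
    exact csInf_le hfin.bddBelow ⟨J, hJ, rfl⟩

/-- For a linear system `𝒯` spanned by `k` linearly independent degree-`d`
forms, a member `F` of `𝒯`, and a normalized one-parameter subgroup `a`, there exist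
`k−1` members `g_1,…,g_{k−1}` of `𝒯` with
`ω(𝒯,a) ≤ k · max{ω(F,a), ω(g_1,a), …, ω(g_{k−1},a)}`. -/
theorem omega_tuple_le_max (n d k : ℕ) (hn : 1 ≤ n) (hd : 1 ≤ d) (hk : 1 ≤ k)
    (f : Fin k → MvPolynomial (Fin (n+1)) ℂ)
    (hhom : ∀ i, (f i).IsHomogeneous d)
    (hind : LinearIndependent ℂ f)
    (F : MvPolynomial (Fin (n+1)) ℂ) (hF0 : F ≠ 0)
    (hFmem : F ∈ Submodule.span ℂ (Set.range f))
    (a : Fin (n+1) → ℤ) (ha : Normalized n a) :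
    ∃ g : Fin (k - 1) → MvPolynomial (Fin (n+1)) ℂ,
      (∀ i, g i ≠ 0 ∧ g i ∈ Submodule.span ℂ (Set.range f)) ∧
      omegaT n d k a f ≤ (k : ℤ) *
        (insert (omegaF n a F)
          ((Finset.univ : Finset (Fin (k - 1))).image fun i => omegaF n a (g i))).max'
          (Finset.insert_nonempty _ _) := by
  classical
  obtain ⟨haA, -⟩ := ha
  have hmemdeg : ∀ g ∈ Submodule.span ℂ (Set.range f), ∀ I ∈ g.support, (∑ j, I j) = d := by
    intro g hg I hI
    have hsub : Submodule.span ℂ (Set.range f) ≤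
        MvPolynomial.homogeneousSubmodule (Fin (n+1)) ℂ d := by
      rw [Submodule.span_le]; rintro - ⟨i, rfl⟩; exact hhom i
    have hhg : g.IsHomogeneous d := (MvPolynomial.mem_homogeneousSubmodule _ _).mp (hsub hg)
    have := hhg (MvPolynomial.mem_support_iff.mp hI)
    simpa [Finsupp.weight_apply, Finsupp.sum_fintype] using this
  set P : ℤ → Prop :=
    fun z => ∃ g, g ≠ 0 ∧ g ∈ Submodule.span ℂ (Set.range f) ∧ omegaF n a g = z with hP
  have hbdd : ∃ b : ℤ, ∀ z, P z → z ≤ b := by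
    refine ⟨(d:ℤ) * (a 0 - a (Fin.last n)), ?_⟩
    rintro z ⟨g, hg0, hgmem, rfl⟩
    obtain ⟨⟨I, hI, hωI⟩, -⟩ := omegaF_spec n a g hg0
    rw [hωI]
    exact wt_le_bound n d a haA I (hmemdeg g hgmem I hI)
  obtain ⟨W, ⟨gstar, hg0, hgmem, hgw⟩, hWmax⟩ :=
    Int.exists_greatest_of_bdd hbdd ⟨_, F, hF0, hFmem, rfl⟩
  set ι : Finset (Fin (n+1) →₀ ℕ) :=
    (Finset.univ.biUnion fun i => (f i).support).filter (fun I => wt n a I ≤ W) with hι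
  set v : Fin k → (↥ι) → ℂ := fun i I => MvPolynomial.coeff I.1 (f i) with hv
  have hvli : LinearIndependent ℂ v := by
    by_contra hdep
    obtain ⟨c, hcsum, i0, hc0⟩ := Fintype.not_linearIndependent_iff.mp hdep
    set gp := ∑ i, c i • f i with hgp
    have hgp0 : gp ≠ 0 := fun h => hc0 (Fintype.linearIndependent_iff.mp hind c h i0)
    have hgpmem : gp ∈ Submodule.span ℂ (Set.range f) :=
      Submodule.sum_mem _ fun i _ => Submodule.smul_mem _ _ (Submodule.subset_span ⟨i, rfl⟩)
    have hsupp : ∀ I ∈ gp.support, W < wt n a I := by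
      intro I hI
      by_contra hle
      push_neg at hle
      have hcoeff : MvPolynomial.coeff I gp = ∑ i, c i * MvPolynomial.coeff I (f i) := by
        simp [hgp, MvPolynomial.coeff_sum]
      have hz : MvPolynomial.coeff I gp = 0 := by
        by_cases hmem : I ∈ Finset.univ.biUnion fun i => (f i).support
        · have hIι : I ∈ ι := Finset.mem_filter.mpr ⟨hmem, hle⟩
          have := congrFun hcsum ⟨I, hIι⟩
          simpa [v, hcoeff] using this
        · rw [hcoeff]
          apply Finset.sum_eq_zero
          intro i _
          have h0 : MvPolynomial.coeff I (f i) = 0 := by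
            by_contra h
            exact hmem (Finset.mem_biUnion.mpr
              ⟨i, Finset.mem_univ _, MvPolynomial.mem_support_iff.mpr h⟩)
          rw [h0, mul_zero]
      exact (MvPolynomial.mem_support_iff.mp hI) hz
    obtain ⟨⟨I, hI, hωI⟩, -⟩ := omegaF_spec n a gp hgp0
    have h1 : W < omegaF n a gp := hωI ▸ hsupp I hI
    have h2 : omegaF n a gp ≤ W := hWmax _ ⟨gp, hgp0, hgpmem, rfl⟩
    omega
  obtain ⟨s, hsinj, hsdet⟩ := minor_lemma v hvli
  set S : Finset (Fin (n+1) →₀ ℕ) := Finset.image (fun j => (s j).1) Finset.univ with hS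
  have hsinj' : Function.Injective fun j : Fin k => (s j).1 :=
    fun j1 j2 h => hsinj (Subtype.ext h)
  have hScard : S.card = k := by
    rw [hS, Finset.card_image_of_injective _ hsinj', Finset.card_univ, Fintype.card_fin]
  have hSmem : ∀ I ∈ S, I ∈ ι := by
    intro I hI
    obtain ⟨j, -, rfl⟩ := Finset.mem_image.mp hI
    exact (s j).2
  have hPl : InPlucker n d k f S := by
    constructor
    · intro I hI
      obtain ⟨hbi, -⟩ := Finset.mem_filter.mp (hSmem I hI)
      obtain ⟨i, -, hIs⟩ := Finset.mem_biUnion.mp hbi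
      exact hmemdeg (f i) (Submodule.subset_span ⟨i, rfl⟩) I hIs
    · refine ⟨hScard, ?_⟩
      set e : Fin k → (Fin (n+1) →₀ ℕ) :=
        fun j => (S.equivFin.symm (Fin.cast hScard.symm j)).1 with he
      have heinj : Function.Injective e := by
        intro j1 j2 h
        have := S.equivFin.symm.injective (Subtype.ext h)
        exact Fin.cast_injective _ this
      have hechoice : ∀ j, ∃ j', (s j').1 = e j := by
        intro j
        have hmem : e j ∈ S := (S.equivFin.symm _).2
        obtain ⟨j', -, hj'⟩ := Finset.mem_image.mp hmem
        exact ⟨j', hj'⟩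
      choose τ hτ using hechoice
      have hτinj : Function.Injective τ := by
        intro j1 j2 h
        apply heinj
        rw [← hτ, ← hτ, h]
      let σ : Equiv.Perm (Fin k) := Equiv.ofBijective τ (Finite.injective_iff_bijective.mp hτinj)
      have hNM : (Matrix.of fun i j : Fin k => MvPolynomial.coeff (e j) (f i))
          = (Matrix.of fun i j : Fin k => v i (s j)).submatrix id ⇑σ := by
        ext i j
        simp only [Matrix.submatrix_apply, Matrix.of_apply, id_eq]
        rw [show σ j = τ j from rfl, hv]
        rw [← hτ j]
      show Matrix.det (Matrix.of fun i j : Fin k => MvPolynomial.coeff (e j) (f i)) ≠ 0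
      rw [hNM, Matrix.det_permute' σ]
      simp only [ne_eq, mul_eq_zero, not_or]
      exact ⟨by simp, hsdet⟩
  refine ⟨fun _ => gstar, fun i => ⟨hg0, hgmem⟩, ?_⟩
  have h1 : omegaT n d k a f ≤ ∑ I ∈ S, wt n a I := by
    apply csInf_le
    · refine ⟨0, ?_⟩
      rintro x ⟨S', hS', rfl⟩
      exact Finset.sum_nonneg fun I _ => wt_nonneg' n a haA I
    · exact ⟨S, hPl, rfl⟩
  have h2 : ∑ I ∈ S, wt n a I ≤ (k:ℤ) * W := by
    calc ∑ I ∈ S, wt n a I ≤ S.card • W :=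
        Finset.sum_le_card_nsmul _ _ _ (fun I hI => (Finset.mem_filter.mp (hSmem I hI)).2)
      _ = (k:ℤ) * W := by rw [hScard]; simp [nsmul_eq_mul]
  have h3 : W ≤ (insert (omegaF n a F)
      ((Finset.univ : Finset (Fin (k - 1))).image fun _ => omegaF n a gstar)).max'
      (Finset.insert_nonempty _ _) := by
    rcases Nat.lt_or_ge 1 k with hk2 | hk1
    · apply Finset.le_max'
      rw [← hgw]
      exact Finset.mem_insert.mpr (Or.inr (Finset.mem_image.mpr
        ⟨⟨0, by omega⟩, Finset.mem_univ _, rfl⟩))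
    · have hk1' : k = 1 := le_antisymm hk1 hk
      subst hk1'
      have hrange : Set.range f = {f 0} := Set.range_unique
      rw [hrange] at hgmem hFmem
      obtain ⟨c, hc⟩ := Submodule.mem_span_singleton.mp hgmem
      obtain ⟨c', hc'⟩ := Submodule.mem_span_singleton.mp hFmem
      have hcne : c ≠ 0 := by rintro rfl; simp at hc; exact hg0 hc.symm
      have hcne' : c' ≠ 0 := by rintro rfl; simp at hc'; exact hF0 hc'.symm
      have hsupp : gstar.support = F.support := by
        rw [← hc, ← hc', MvPolynomial.support_smul_eq hcne, MvPolynomial.support_smul_eq hcne']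
      have hWF : W = omegaF n a F := by
        rw [← hgw]
        unfold omegaF
        rw [hsupp]
      rw [hWF]
      exact Finset.le_max' _ _ (Finset.mem_insert_self _ _)
  calc omegaT n d k a f ≤ ∑ I ∈ S, wt n a I := h1
    _ ≤ (k:ℤ) * W := h2
    _ ≤ _ := mul_le_mul_of_nonneg_left h3 (Int.natCast_nonneg k)
end
end

section
/- Let 𝒯 be the linear system spanned by k linearly independent degree-d forms f_1,…,f_k in x_0,…,x_n over ℂ. If every member of 𝒯 is semistable, then 𝒯 is semistable; if every member of 𝒯 is stable, then 𝒯 is stable. -/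
noncomputable section

open Finset MvPolynomial

def linSub (n : ℕ) (A : Matrix.SpecialLinearGroup (Fin (n+1)) ℂ) :
    MvPolynomial (Fin (n+1)) ℂ →ₐ[ℂ] MvPolynomial (Fin (n+1)) ℂ :=
  MvPolynomial.aeval (fun i => ∑ j, MvPolynomial.C ((A : Matrix (Fin (n+1)) (Fin (n+1)) ℂ) i j)
      * MvPolynomial.X j)

lemma linSub_comp (n : ℕ) (A B : Matrix.SpecialLinearGroup (Fin (n+1)) ℂ)
    (g : MvPolynomial (Fin (n+1)) ℂ) :
    linSub n B (linSub n A g) = linSub n (A * B) g := by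
  show (linSub n B) ((aeval _) g) = _
  rw [MvPolynomial.comp_aeval_apply]
  have hfun : (fun i => (linSub n B) (∑ j, MvPolynomial.C
      ((A : Matrix (Fin (n+1)) (Fin (n+1)) ℂ) i j) * MvPolynomial.X j))
      = fun i => ∑ l, MvPolynomial.C
      (((A * B : Matrix.SpecialLinearGroup (Fin (n+1)) ℂ) : Matrix (Fin (n+1)) (Fin (n+1)) ℂ) i l)
      * MvPolynomial.X l := by
    funext i
    rw [map_sum]
    simp only [map_mul, linSub, aeval_C, aeval_X, Finset.mul_sum, algebraMap_eq]
    rw [Finset.sum_comm]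
    refine Finset.sum_congr rfl fun l _ => ?_
    rw [Matrix.SpecialLinearGroup.coe_mul, Matrix.mul_apply, map_sum, Finset.sum_mul]
    refine Finset.sum_congr rfl fun j _ => ?_
    rw [map_mul, mul_assoc]
  rw [hfun]
  rfl

lemma linSub_one (n : ℕ) (g : MvPolynomial (Fin (n+1)) ℂ) : linSub n 1 g = g := by
  have : (fun i => ∑ j, MvPolynomial.C
      (((1 : Matrix.SpecialLinearGroup (Fin (n+1)) ℂ) : Matrix (Fin (n+1)) (Fin (n+1)) ℂ) i j)
      * MvPolynomial.X j) = (MvPolynomial.X : Fin (n+1) → MvPolynomial (Fin (n+1)) ℂ) := by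
    funext i
    rw [Finset.sum_eq_single i]
    · simp [Matrix.one_apply]
    · intro j _ hj
      simp [Matrix.one_apply, (Ne.symm hj)]
    · simp
  rw [linSub, this, aeval_X_left_apply]

lemma linSub_leftInv (n : ℕ) (A : Matrix.SpecialLinearGroup (Fin (n+1)) ℂ)
    (g : MvPolynomial (Fin (n+1)) ℂ) : linSub n A⁻¹ (linSub n A g) = g := by
  rw [linSub_comp, mul_inv_cancel, linSub_one]

lemma linSub_injective (n : ℕ) (A : Matrix.SpecialLinearGroup (Fin (n+1)) ℂ) :
    Function.Injective (linSub n A) :=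
  Function.LeftInverse.injective (g := linSub n A⁻¹) (linSub_leftInv n A)

lemma linSub_isHomogeneous (n d : ℕ) (A : Matrix.SpecialLinearGroup (Fin (n+1)) ℂ)
    {g : MvPolynomial (Fin (n+1)) ℂ} (hg : g.IsHomogeneous d) :
    (linSub n A g).IsHomogeneous d := by
  have := hg.aeval (fun i => ∑ j, MvPolynomial.C
      ((A : Matrix (Fin (n+1)) (Fin (n+1)) ℂ) i j) * MvPolynomial.X j) (n := 1) ?_
  · simpa [linSub] using this
  · intro i
    have : (∑ j, MvPolynomial.C ((A : Matrix (Fin (n+1)) (Fin (n+1)) ℂ) i j)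
        * MvPolynomial.X j) ∈ homogeneousSubmodule (Fin (n+1)) ℂ 1 := by
      refine Submodule.sum_mem _ fun j _ => ?_
      rw [MvPolynomial.mem_homogeneousSubmodule]
      exact (MvPolynomial.isHomogeneous_X _ _).C_mul _
    rwa [MvPolynomial.mem_homogeneousSubmodule] at this

lemma isHomogeneous_degree {d : ℕ} {g : MvPolynomial (Fin (n+1)) ℂ} (hg : g.IsHomogeneous d)
    {I : Fin (n+1) →₀ ℕ} (hI : I ∈ g.support) : ∑ j, I j = d := by
  have := hg (MvPolynomial.mem_support_iff.mp hI)
  simpa [Finsupp.weight, Finsupp.linearCombination, Finsupp.sum_fintype] using this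

lemma exists_inPlucker (n d k : ℕ) (f : Fin k → MvPolynomial (Fin (n+1)) ℂ)
    (hhom : ∀ i, (f i).IsHomogeneous d) (hind : LinearIndependent ℂ f) :
    ∃ S, InPlucker n d k f S := by
  classical
  set T : Finset (Fin (n+1) →₀ ℕ) := Finset.univ.biUnion (fun i => (f i).support) with hT
  set M : Matrix (Fin k) {x // x ∈ T} ℂ :=
    Matrix.of (fun i (t : {x // x ∈ T}) => MvPolynomial.coeff t.1 (f i)) with hM
  have hrows : LinearIndependent ℂ M.row := by
    rw [Fintype.linearIndependent_iff]
    intro u hu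
    have h0 : ∑ i, u i • f i = 0 := by
      ext J
      rw [MvPolynomial.coeff_sum, MvPolynomial.coeff_zero]
      by_cases hJ : J ∈ T
      · have := congr_fun hu ⟨J, hJ⟩
        simpa [hM, MvPolynomial.coeff_smul] using this
      · refine Finset.sum_eq_zero fun i _ => ?_
        have : J ∉ (f i).support := fun hmem => hJ (Finset.mem_biUnion.mpr ⟨i, Finset.mem_univ i, hmem⟩)
        rw [MvPolynomial.coeff_smul, MvPolynomial.notMem_support_iff.mp this, smul_zero]
    exact Fintype.linearIndependent_iff.mp hind u h0
  have hrank : M.rank = k := by simpa using hrows.rank_matrix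
  have hspan : Submodule.span ℂ (Set.range M.transpose) = ⊤ := by
    apply Submodule.eq_top_of_finrank_eq
    rw [show Set.range M.transpose = Set.range M.col from rfl, ← Matrix.rank_eq_finrank_span_cols, hrank]
    simp
  obtain ⟨b, hbsub, hbspan, hbind⟩ := exists_linearIndependent ℂ (Set.range M.transpose)
  rw [hspan] at hbspan
  have hbfin : b.Finite := Set.Finite.subset (Set.finite_range M.transpose) hbsub
  have : Fintype b := hbfin.fintype
  have hbasis : Module.Basis b ℂ (Fin k → ℂ) := Module.Basis.mk hbind (by rw [Subtype.range_coe, hbspan])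
  have hbcard : Fintype.card b = k := by
    have := Module.finrank_eq_card_basis hbasis
    simpa using this.symm
  choose tt htt using fun x : b => Set.mem_range.mp (hbsub x.2)
  have htt_inj : Function.Injective (fun x : b => (tt x).1) := by
    intro x1 x2 h12
    have he : tt x1 = tt x2 := Subtype.ext h12
    apply Subtype.ext
    rw [← htt x1, ← htt x2, he]
  set S : Finset (Fin (n+1) →₀ ℕ) := Finset.univ.image (fun x : b => (tt x).1) with hS
  have hcard : S.card = k := by
    rw [hS, Finset.card_image_of_injective _ htt_inj, Finset.card_univ, hbcard]
  refine ⟨S, ?_, hcard, ?_⟩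
  · intro I hI
    obtain ⟨x, _, hx⟩ := Finset.mem_image.mp hI
    have hIT : I ∈ T := by rw [← hx]; exact (tt x).2
    obtain ⟨i, _, hi⟩ := Finset.mem_biUnion.mp hIT
    exact isHomogeneous_degree (hhom i) hi
  · set col : Fin k → Fin (n+1) →₀ ℕ :=
      fun j => (S.equivFin.symm (Fin.cast hcard.symm j)).1 with hcol
    have hcolS : ∀ j, col j ∈ S := fun j => (S.equivFin.symm (Fin.cast hcard.symm j)).2
    have hcol_inj : Function.Injective col := by
      intro j1 j2 h
      have := S.equivFin.symm.injective (Subtype.ext h)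
      exact Fin.cast_injective _ this
    choose xx hxx using fun j => Finset.mem_image.mp (hcolS j)
    have hxx' : ∀ j, (tt (xx j)).1 = col j := fun j => (hxx j).2
    have hvec : ∀ j, (fun i => MvPolynomial.coeff (col j) (f i)) = ((xx j : Fin k → ℂ)) := by
      intro j
      have := htt (xx j)
      have h2 : M.transpose (tt (xx j)) = (fun i => MvPolynomial.coeff (col j) (f i)) := by
        funext i
        simp [hM, Matrix.transpose_apply, hxx' j]
      rw [← h2, this]
    have hxx_inj : Function.Injective xx := by
      intro j1 j2 h
      apply hcol_inj
      rw [← hxx' j1, ← hxx' j2, h]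
    have hxx_bij : Function.Bijective xx :=
      (Fintype.bijective_iff_injective_and_card xx).mpr ⟨hxx_inj, by simp [hbcard]⟩
    have hind2 : LinearIndependent ℂ (fun j : Fin k => ((xx j : Fin k → ℂ))) :=
      hbind.comp xx hxx_inj
    have : LinearIndependent ℂ (fun j : Fin k =>
        (Matrix.of fun i j : Fin k => MvPolynomial.coeff (col j) (f i)).transpose j) := by
      convert hind2 using 1
      funext j
      exact hvec j
    have hunit := Matrix.linearIndependent_cols_iff_isUnit.mp this
    have := hunit.map (Matrix.detMonoidHom)
    simpa [isUnit_iff_ne_zero] using this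

lemma wt_lower {n d : ℕ} (a : Fin (n+1) → ℤ) {I : Fin (n+1) →₀ ℕ} (hI : ∑ j, I j = d) :
    -((d : ℤ) * ∑ j : Fin n, |a j.castSucc - a (Fin.last n)|) ≤ wt n a I := by
  rw [wt, Finset.mul_sum, ← Finset.sum_neg_distrib]
  refine Finset.sum_le_sum fun j _ => ?_
  have h1 : (I j.castSucc : ℤ) ≤ d := by
    rw [← hI]
    exact_mod_cast Finset.single_le_sum (f := fun l => I l) (fun l _ => Nat.zero_le _)
      (Finset.mem_univ j.castSucc)
  have h2 : |(I j.castSucc : ℤ) * (a j.castSucc - a (Fin.last n))| ≤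
      (d : ℤ) * |a j.castSucc - a (Fin.last n)| := by
    rw [abs_mul, abs_of_nonneg (by positivity : (0:ℤ) ≤ (I j.castSucc : ℤ))]
    exact mul_le_mul_of_nonneg_right h1 (abs_nonneg _)
  nlinarith [neg_abs_le ((I j.castSucc : ℤ) * (a j.castSucc - a (Fin.last n)))]

lemma key (n d k : ℕ) (a : Fin (n+1) → ℤ) (f : Fin k → MvPolynomial (Fin (n+1)) ℂ)
    (hhom : ∀ i, (f i).IsHomogeneous d) (hind : LinearIndependent ℂ f) :
    ∃ g : Fin k → MvPolynomial (Fin (n+1)) ℂ,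
      (∀ i, g i ≠ 0 ∧ g i ∈ Submodule.span ℂ (Set.range f)) ∧
      ∃ w : Fin k → ℤ, omegaT n d k a f = ∑ i, w i ∧ ∀ i, w i ≤ omegaF n a (g i) := by
  classical
  set E : Set ℤ :=
    {x : ℤ | ∃ S : Finset (Fin (n+1) →₀ ℕ), InPlucker n d k f S ∧ x = ∑ I ∈ S, wt n a I}
    with hE
  have hne : E.Nonempty := by
    obtain ⟨S, hS⟩ := exists_inPlucker n d k f hhom hind
    exact ⟨∑ I ∈ S, wt n a I, S, hS, rfl⟩
  set B : ℤ := (d : ℤ) * ∑ j : Fin n, |a j.castSucc - a (Fin.last n)| with hB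
  have hbdd : BddBelow E := by
    refine ⟨(k : ℤ) * (-B), fun x hx => ?_⟩
    obtain ⟨S, ⟨hdeg, hcard, _⟩, rfl⟩ := hx
    calc (k : ℤ) * (-B) = S.card • (-B) := by rw [hcard]; simp [nsmul_eq_mul]
    _ ≤ ∑ I ∈ S, wt n a I := Finset.card_nsmul_le_sum _ _ _ fun I hI => wt_lower a (hdeg I hI)
  have homega : omegaT n d k a f = sInf E := rfl
  obtain ⟨S₀, hP₀, hsum₀⟩ := Int.csInf_mem hne hbdd
  have hmin : ∀ x ∈ E, omegaT n d k a f ≤ x := fun x hx => csInf_le hbdd hx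
  obtain ⟨hdeg₀, hcard, hdet⟩ := hP₀
  set col : Fin k → Fin (n+1) →₀ ℕ :=
    fun j => (S₀.equivFin.symm (Fin.cast hcard.symm j)).1 with hcol
  have hcolS : ∀ j, col j ∈ S₀ := fun j => (S₀.equivFin.symm (Fin.cast hcard.symm j)).2
  have hcol_inj : Function.Injective col := fun j1 j2 h =>
    Fin.cast_injective _ (S₀.equivFin.symm.injective (Subtype.ext h))
  have hsurj : ∀ I ∈ S₀, ∃ m, col m = I := by
    intro I hI
    refine ⟨Fin.cast hcard (S₀.equivFin ⟨I, hI⟩), ?_⟩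
    simp [hcol]
  set M : Matrix (Fin k) (Fin k) ℂ :=
    Matrix.of (fun i j : Fin k => MvPolynomial.coeff (col j) (f i)) with hM
  have hdetM : M.det ≠ 0 := hdet
  set N : Matrix (Fin k) (Fin k) ℂ := M⁻¹ with hN
  have hNM : N * M = 1 := Matrix.nonsing_inv_mul M (Ne.isUnit hdetM)
  have hdetN : N.det ≠ 0 := Matrix.det_ne_zero_of_right_inverse hNM
  set g : Fin k → MvPolynomial (Fin (n+1)) ℂ := fun i => ∑ m, N i m • f m with hg
  have hcoeff : ∀ (i : Fin k) (c : Fin (n+1) →₀ ℕ),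
      MvPolynomial.coeff c (g i) = ∑ m, N i m * MvPolynomial.coeff c (f m) := by
    intro i c
    rw [hg, MvPolynomial.coeff_sum]
    exact Finset.sum_congr rfl fun m _ => by rw [MvPolynomial.coeff_smul, smul_eq_mul]
  have hcoeff_col : ∀ i j, MvPolynomial.coeff (col j) (g i) = (1 : Matrix (Fin k) (Fin k) ℂ) i j := by
    intro i j
    rw [hcoeff, ← hNM, Matrix.mul_apply]
    rfl
  have hg_ne : ∀ i, g i ≠ 0 := by
    intro i h0
    have := hcoeff_col i i
    rw [h0, MvPolynomial.coeff_zero, Matrix.one_apply_eq] at this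
    exact one_ne_zero this.symm
  have hg_mem : ∀ i, g i ∈ Submodule.span ℂ (Set.range f) := fun i =>
    Submodule.sum_mem _ fun m _ =>
      Submodule.smul_mem _ _ (Submodule.subset_span (Set.mem_range_self m))
  have hg_hom : ∀ i, (g i).IsHomogeneous d := by
    intro i
    rw [← MvPolynomial.mem_homogeneousSubmodule]
    exact Submodule.sum_mem _ fun m _ => Submodule.smul_mem _ _
      ((MvPolynomial.mem_homogeneousSubmodule _ _).mpr (hhom m))
  have hcol_supp : ∀ i, col i ∈ (g i).support := by
    intro i
    rw [MvPolynomial.mem_support_iff, hcoeff_col, Matrix.one_apply_eq]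
    exact one_ne_zero
  -- the exchange argument
  have hkey : ∀ i, ∀ J ∈ (g i).support, wt n a (col i) ≤ wt n a J := by
    intro i J hJ
    by_contra hlt
    push_neg at hlt
    have hJcoeff : MvPolynomial.coeff J (g i) ≠ 0 := MvPolynomial.mem_support_iff.mp hJ
    have hJS : J ∉ S₀ := by
      intro hJS
      obtain ⟨m, hm⟩ := hsurj J hJS
      have := hcoeff_col i m
      rw [hm] at this
      by_cases him : i = m
      · subst him; rw [hm] at hlt; exact lt_irrefl _ hlt
      · rw [Matrix.one_apply_ne him] at this; exact hJcoeff this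
    have hJe : J ∉ S₀.erase (col i) := fun h => hJS (Finset.mem_of_mem_erase h)
    set S' : Finset (Fin (n+1) →₀ ℕ) := insert J (S₀.erase (col i)) with hS'
    have hcard' : S'.card = k := by
      rw [hS', Finset.card_insert_of_notMem hJe, Finset.card_erase_of_mem (hcolS i), hcard]
      have : 1 ≤ S₀.card := Finset.card_pos.mpr ⟨col i, hcolS i⟩
      omega
    have hdeg' : ∀ I ∈ S', (∑ j, I j) = d := by
      intro I hI
      rcases Finset.mem_insert.mp hI with h | h
      · subst h; exact isHomogeneous_degree (hg_hom i) hJ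
      · exact hdeg₀ I (Finset.mem_of_mem_erase h)
    set col' : Fin k → Fin (n+1) →₀ ℕ :=
      fun j => (S'.equivFin.symm (Fin.cast hcard'.symm j)).1 with hcol'
    have hcol'S : ∀ j, col' j ∈ S' := fun j => (S'.equivFin.symm (Fin.cast hcard'.symm j)).2
    have hcol'_inj : Function.Injective col' := fun j1 j2 h =>
      Fin.cast_injective _ (S'.equivFin.symm.injective (Subtype.ext h))
    set D : Matrix (Fin k) (Fin k) ℂ :=
      Matrix.of (fun i j : Fin k => MvPolynomial.coeff (col' j) (f i)) with hD
    set G : Matrix (Fin k) (Fin k) ℂ :=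
      Matrix.of (fun l j : Fin k => MvPolynomial.coeff (col' j) (g l)) with hG
    have hGND : G = N * D := by
      ext l j
      rw [Matrix.mul_apply]
      exact hcoeff l (col' j)
    set v : Fin k → ℂ := fun l => MvPolynomial.coeff J (g l) with hv
    choose minv hminv using hsurj
    set π : Fin k → Fin k := fun j =>
      if h : col' j = J then i
      else minv (col' j) (Finset.mem_of_mem_erase
        ((Finset.mem_insert.mp (hcol'S j)).resolve_left h)) with hπ
    have hπ_spec : ∀ j, (col' j = J ∧ π j = i) ∨
        (col' j ≠ J ∧ col (π j) = col' j ∧ π j ≠ i) := by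
      intro j
      by_cases h : col' j = J
      · left; exact ⟨h, by rw [hπ]; simp [h]⟩
      · right
        refine ⟨h, ?_, ?_⟩
        · rw [hπ]; simp only [h, dite_false]; exact hminv _ _
        · intro hpi
          have hmem := (Finset.mem_insert.mp (hcol'S j)).resolve_left h
          have : col (π j) = col' j := by rw [hπ]; simp only [h, dite_false]; exact hminv _ _
          rw [hpi] at this
          exact (Finset.ne_of_mem_erase hmem) (this.symm)
    have hπ_inj : Function.Injective π := by
      intro j1 j2 h12
      rcases hπ_spec j1 with ⟨e1, p1⟩ | ⟨e1, c1, p1⟩ <;>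
        rcases hπ_spec j2 with ⟨e2, p2⟩ | ⟨e2, c2, p2⟩
      · exact hcol'_inj (e1.trans e2.symm)
      · exact absurd (h12.symm.trans p1) p2
      · exact absurd (h12.trans p2) p1
      · exact hcol'_inj (c1.symm.trans (by rw [h12, c2]))
    have hπ_bij : Function.Bijective π := Finite.injective_iff_bijective.mp hπ_inj
    set πe : Equiv.Perm (Fin k) := Equiv.ofBijective π hπ_bij with hπe
    have hGsub : G = (Matrix.updateCol (1 : Matrix (Fin k) (Fin k) ℂ) i v).submatrix id π := by
      ext l j
      rw [Matrix.submatrix_apply, id_eq]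
      rcases hπ_spec j with ⟨e1, p1⟩ | ⟨e1, c1, p1⟩
      · rw [p1, Matrix.updateCol_self]
        show MvPolynomial.coeff (col' j) (g l) = v l
        rw [e1]
      · rw [Matrix.updateCol_ne p1]
        show MvPolynomial.coeff (col' j) (g l) = _
        rw [← c1, hcoeff_col]
    have hdetG : G.det ≠ 0 := by
      rw [hGsub]
      have : (Matrix.updateCol (1 : Matrix (Fin k) (Fin k) ℂ) i v).submatrix id π
          = (Matrix.updateCol (1 : Matrix (Fin k) (Fin k) ℂ) i v).submatrix id πe := rfl
      rw [this, Matrix.det_permute']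
      have hvdet : (Matrix.updateCol (1 : Matrix (Fin k) (Fin k) ℂ) i v).det = v i := by
        rw [← Matrix.cramer_apply, Matrix.cramer_one]
        rfl
      rw [hvdet]
      exact mul_ne_zero (by simp) hJcoeff
    have hdetD : D.det ≠ 0 := by
      intro h0
      rw [hGND, Matrix.det_mul, h0, mul_zero] at hdetG
      exact hdetG rfl
    have hmem' : (∑ I ∈ S', wt n a I) ∈ E := ⟨S', ⟨hdeg', hcard', hdetD⟩, rfl⟩
    have hle := hmin _ hmem'
    rw [homega, hsum₀] at hle
    have hsum' : ∑ I ∈ S', wt n a I = wt n a J + (∑ I ∈ S₀, wt n a I - wt n a (col i)) := by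
      rw [hS', Finset.sum_insert hJe, Finset.sum_erase_eq_sub (hcolS i)]
    omega
  refine ⟨g, fun i => ⟨hg_ne i, hg_mem i⟩, fun i => wt n a (col i), ?_, ?_⟩
  · rw [homega, hsum₀, ← Finset.sum_attach S₀ (fun I => wt n a I)]
    exact Fintype.sum_equiv ((finCongr hcard.symm).trans S₀.equivFin.symm).symm _ _
      (fun x => by simp [hcol])
  · intro i
    refine le_csInf ⟨wt n a (col i), col i, hcol_supp i, rfl⟩ ?_
    rintro x ⟨J, hJ, rfl⟩
    exact hkey i J hJ


lemma core (n d k : ℕ) (f : Fin k → MvPolynomial (Fin (n+1)) ℂ)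
    (hhom : ∀ i, (f i).IsHomogeneous d) (hind : LinearIndependent ℂ f)
    (A : Matrix.SpecialLinearGroup (Fin (n+1)) ℂ) (a : Fin (n+1) → ℤ) :
    ∃ h : Fin k → MvPolynomial (Fin (n+1)) ℂ,
      (∀ i, h i ≠ 0 ∧ h i ∈ Submodule.span ℂ (Set.range f)) ∧
      (omegaT n d k a (fun i => actSL n A (f i)) : ℚ) ≤
        ∑ i, (omegaF n a (actSL n A (h i)) : ℚ) := by
  classical
  set f' : Fin k → MvPolynomial (Fin (n+1)) ℂ := fun i => linSub n A (f i) with hf'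
  have hhom' : ∀ i, (f' i).IsHomogeneous d := fun i => linSub_isHomogeneous n d A (hhom i)
  have hind' : LinearIndependent ℂ f' := by
    have := hind.map' (linSub n A).toLinearMap
      (LinearMap.ker_eq_bot.mpr (linSub_injective n A))
    exact this
  obtain ⟨g, hgprop, w, hsum, hwle⟩ := key n d k a f' hhom' hind'
  have hspan : Submodule.span ℂ (Set.range f') =
      Submodule.map (linSub n A).toLinearMap (Submodule.span ℂ (Set.range f)) := by
    rw [← Submodule.span_image]
    congr 1
    rw [hf', ← Set.range_comp]
    rfl
  have hpre : ∀ i, ∃ h : MvPolynomial (Fin (n+1)) ℂ,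
      h ∈ Submodule.span ℂ (Set.range f) ∧ h ≠ 0 ∧ linSub n A h = g i := by
    intro i
    have := (hgprop i).2
    rw [hspan] at this
    obtain ⟨h, hh, hhg⟩ := this
    refine ⟨h, hh, ?_, hhg⟩
    intro h0
    rw [h0] at hhg
    simp only [map_zero] at hhg
    exact (hgprop i).1 hhg.symm
  choose h hhspan hhne hhg using hpre
  refine ⟨h, fun i => ⟨hhne i, hhspan i⟩, ?_⟩
  have heq : ∀ i, actSL n A (h i) = g i := fun i => hhg i
  have h1 : (omegaT n d k a (fun i => actSL n A (f i)) : ℚ) = ((∑ i, w i : ℤ) : ℚ) := by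
    have : omegaT n d k a (fun i => actSL n A (f i)) = omegaT n d k a f' := rfl
    rw [this, hsum]
  rw [h1]
  push_cast
  refine Finset.sum_le_sum fun i _ => ?_
  have := hwle i
  rw [heq i]
  exact_mod_cast this

/-- If every member of a linear system `𝒯` spanned by `k` linearly
independent degree-`d` forms is semistable (resp. stable), then `𝒯` is semistable
(resp. stable). -/
theorem tuple_stable_of_members_stable (n d k : ℕ) (hn : 1 ≤ n) (hd : 1 ≤ d) (hk : 1 ≤ k)
    (f : Fin k → MvPolynomial (Fin (n+1)) ℂ)
    (hhom : ∀ i, (f i).IsHomogeneous d)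
    (hind : LinearIndependent ℂ f) :
    ((∀ g : MvPolynomial (Fin (n+1)) ℂ, g ≠ 0 →
        g ∈ Submodule.span ℂ (Set.range f) → FormSemistable n d g) →
      TupleSemistable n d k f) ∧
    ((∀ g : MvPolynomial (Fin (n+1)) ℂ, g ≠ 0 →
        g ∈ Submodule.span ℂ (Set.range f) → FormStable n d g) →
      TupleStable n d k f) := by
  constructor
  · intro hmem A a hna ha0
    obtain ⟨h, hp, hle⟩ := core n d k f hhom hind A a
    refine hle.trans ?_
    have hbound : ∀ i : Fin k, (omegaF n a (actSL n A (h i)) : ℚ) ≤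
        (d : ℚ) / (n + 1) * (Cwt n a : ℚ) :=
      fun i => hmem (h i) (hp i).1 (hp i).2 A a hna ha0
    calc ∑ i, (omegaF n a (actSL n A (h i)) : ℚ)
        ≤ ∑ _i : Fin k, (d : ℚ) / (n + 1) * (Cwt n a : ℚ) :=
          Finset.sum_le_sum fun i _ => hbound i
      _ = (k : ℚ) * d / (n + 1) * (Cwt n a : ℚ) := by
          rw [Finset.sum_const, Finset.card_univ, Fintype.card_fin, nsmul_eq_mul]
          ring
  · intro hmem A a hna ha0
    obtain ⟨h, hp, hle⟩ := core n d k f hhom hind A a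
    refine lt_of_le_of_lt hle ?_
    have hbound : ∀ i : Fin k, (omegaF n a (actSL n A (h i)) : ℚ) <
        (d : ℚ) / (n + 1) * (Cwt n a : ℚ) :=
      fun i => hmem (h i) (hp i).1 (hp i).2 A a hna ha0
    have hne : (Finset.univ : Finset (Fin k)).Nonempty := ⟨⟨0, hk⟩, Finset.mem_univ _⟩
    calc ∑ i, (omegaF n a (actSL n A (h i)) : ℚ)
        < ∑ _i : Fin k, (d : ℚ) / (n + 1) * (Cwt n a : ℚ) :=
          Finset.sum_lt_sum_of_nonempty hne fun i _ => hbound i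
      _ = (k : ℚ) * d / (n + 1) * (Cwt n a : ℚ) := by
          rw [Finset.sum_const, Finset.card_univ, Fintype.card_fin, nsmul_eq_mul]
          ring
end
end
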